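/- arXiv:0803.1535 — 2 statements merged into one kernel-verified Lean document; each statement's English description precedes it below -/
import Mathlib

section
/- Let K be a field, c ≥ 1 an integer, and L_0, L_1, …, L_{c+1} linearly independent linear forms in a polynomial ring S = K[x_1,…,x_n]. Let M be the ideal generated by the 2×2 minors L_i L_{j+1} − L_{i+1} L_j (0 ≤ i < j ≤ c) of the non-generic scroll block with rows (L_0,…,L_c) and (L_1,…,L_{c+1}). Let Δ be a K-subspace of the space of linear forms of S, and suppose M ⊆ (Δ). Then either (1) {L_0, L_1, …, L_c} ⊆ Δ or {L_1, L_2, …, L_{c+1}} ⊆ Δ, or (2) there exist a linear form H ∉ Δ and a nonzero constant α ∈ K such that L_j − α^j H ∈ Δ for all j = 0, 1, …, c+1. -/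
/-!
Substituting for each variable its projection onto a complement of `Δ` along `Δ` gives an
algebra endomorphism `φ` of `S` that kills `(Δ)`, hence `M`, and kills a linear form exactly when
it lies in `Δ`. The linear forms `l_j = φ(L_j)` then live in a domain and satisfy
`l_i l_{j+1} = l_{i+1} l_j`. If `l_0 = 0` or `l_{c+1} = 0`, the minors `l_k l_{k+2} = l_{k+1}²`
propagate the zero along a row. Otherwise `l_0` is prime and divides `l_1²`, so `l_1 = α l_0`,
cancelling `l_0` in `l_0 l_{j+1} = l_1 l_j` gives `l_j = α^j l_0`, and `H = L_0` works.
-/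

open MvPolynomial

namespace MvPolynomial

theorem IsHomogeneous.exists_eq_smul_of_dvd {σ R : Type*} [CommRing R] [IsDomain R]
    {p q : MvPolynomial σ R} {n : ℕ} (hp : p.IsHomogeneous n) (hq : q.IsHomogeneous n)
    (hp0 : p ≠ 0) (hdvd : p ∣ q) : ∃ a : R, q = a • p := by
  obtain ⟨g, rfl⟩ := hdvd
  rcases eq_or_ne g 0 with rfl | hg0
  · exact ⟨0, by simp⟩
  have hdeg : p.totalDegree + g.totalDegree = p.totalDegree := by
    rw [← totalDegree_mul_of_isDomain hp0 hg0, hq.totalDegree (mul_ne_zero hp0 hg0),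
      hp.totalDegree hp0]
  obtain ⟨a, rfl⟩ : ∃ a, g = C a := ⟨_, totalDegree_eq_zero_iff_eq_C.mp (by omega)⟩
  exact ⟨a, by rw [smul_eq_C_mul, mul_comm]⟩

variable {σ K : Type*} [Field K]

theorem prime_of_isHomogeneous_one {l : MvPolynomial σ K} (hl : l.IsHomogeneous 1)
    (hl0 : l ≠ 0) : Prime l := by
  obtain ⟨d, hd⟩ := ne_zero_iff.mp hl0
  refine (irreducible_of_totalDegree_eq_one (hl.totalDegree hl0) fun x hx => ?_).prime
  exact Ne.isUnit (ne_zero_of_dvd_ne_zero hd (hx d))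

theorem exists_algHom_map_eq_zero_iff_mem (Δ : Submodule K (MvPolynomial σ K))
    (hΔ : Δ ≤ homogeneousSubmodule σ K 1) :
    ∃ φ : MvPolynomial σ K →ₐ[K] MvPolynomial σ K, ∀ f ∈ homogeneousSubmodule σ K 1,
      φ f ∈ homogeneousSubmodule σ K 1 ∧ (φ f = 0 ↔ f ∈ Δ) := by
  obtain ⟨U, hU⟩ := Δ.exists_isCompl
  set q := U.projection Δ hU.symm
  refine ⟨aeval fun i => q (X i), fun f hf => ?_⟩
  have hφq : aeval (fun i => q (X i)) f = q f := by
    rw [homogeneousSubmodule_one_eq_span_X] at hf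
    refine LinearMap.eqOn_span (f := (aeval fun i => q (X i)).toLinearMap) ?_ hf
    rintro _ ⟨i, rfl⟩
    simp
  rw [hφq, Submodule.projection_apply_eq_zero_iff]
  refine ⟨?_, Iff.rfl⟩
  simpa using sub_mem hf (hΔ (Submodule.sub_projection_mem hU.symm f))

end MvPolynomial

def ScrollMinorsVanish {R : Type*} [Mul R] (l : ℕ → R) (c : ℕ) : Prop :=
  ∀ i j, i < j → j ≤ c → l i * l (j + 1) = l (i + 1) * l j

namespace ScrollMinorsVanish

variable {R : Type*} [CommRing R] {l : ℕ → R} {c : ℕ}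

theorem reverse (h : ScrollMinorsVanish l c) : ScrollMinorsVanish (fun k => l (c + 1 - k)) c := by
  intro i j hij hjc
  have := h (c - j) (c - i) (by omega) (by omega)
  dsimp only
  rw [show c + 1 - i = c - i + 1 by omega, show c + 1 - (j + 1) = c - j by omega,
    show c + 1 - (i + 1) = c - i by omega, show c + 1 - j = c - j + 1 by omega]
  rw [mul_comm, this, mul_comm]

variable [IsDomain R]

theorem eq_zero_of_head_eq_zero (h : ScrollMinorsVanish l c) (h0 : l 0 = 0) :
    ∀ j ≤ c, l j = 0 := by
  intro j hj
  induction j with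
  | zero => exact h0
  | succ k ih =>
    have hk := h k (k + 1) k.lt_succ_self hj
    rw [ih (by omega), zero_mul] at hk
    exact mul_self_eq_zero.mp hk.symm

theorem eq_zero_of_last_eq_zero (h : ScrollMinorsVanish l c) (hc : l (c + 1) = 0) (j : ℕ)
    (hj1 : 1 ≤ j) (hjc : j ≤ c + 1) : l j = 0 := by
  have := h.reverse.eq_zero_of_head_eq_zero (by simpa using hc) (c + 1 - j) (by omega)
  rwa [show c + 1 - (c + 1 - j) = j by omega] at this

theorem eq_pow_smul {K : Type*} [CommSemiring K] [Algebra K R] (h : ScrollMinorsVanish l c)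
    (h0 : l 0 ≠ 0) {α : K} (hα : l 1 = α • l 0) : ∀ j ≤ c + 1, l j = α ^ j • l 0 := by
  intro j hj
  induction j with
  | zero => simp
  | succ k ih =>
    rcases Nat.eq_zero_or_pos k with rfl | hk
    · simpa using hα
    have hrel := h 0 k hk (by omega)
    rw [hα, smul_mul_assoc, ← mul_smul_comm] at hrel
    rw [mul_left_cancel₀ h0 hrel, ih (by omega), smul_smul, pow_succ']

end ScrollMinorsVanish

theorem scroll_block_in_linear_ideal_general (K : Type) [Field K] (n c : ℕ) (hc : 1 ≤ c)
    (L : ℕ → MvPolynomial (Fin n) K)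
    (hhom : ∀ j ≤ c + 1, (L j).IsHomogeneous 1)
    (M : Ideal (MvPolynomial (Fin n) K))
    (hM : M = Ideal.span {f | ∃ i j : ℕ, i < j ∧ j ≤ c ∧
        f = L i * L (j + 1) - L (i + 1) * L j})
    (Δ : Submodule K (MvPolynomial (Fin n) K))
    (hΔ : ∀ f ∈ Δ, f.IsHomogeneous 1)
    (hMΔ : M ≤ Ideal.span (Δ : Set (MvPolynomial (Fin n) K))) :
    ((∀ j ≤ c, L j ∈ Δ) ∨ (∀ j, 1 ≤ j → j ≤ c + 1 → L j ∈ Δ)) ∨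
    (∃ H : MvPolynomial (Fin n) K, H.IsHomogeneous 1 ∧ H ∉ Δ ∧
      ∃ α : K, α ≠ 0 ∧ ∀ j ≤ c + 1, L j - α ^ j • H ∈ Δ) := by
  obtain ⟨φ, hφ⟩ := exists_algHom_map_eq_zero_iff_mem Δ hΔ
  have hφΔ : Ideal.span (Δ : Set (MvPolynomial (Fin n) K)) ≤ RingHom.ker φ :=
    Ideal.span_le.mpr fun d hd => (hφ d (hΔ d hd)).2.2 hd
  have hl : ScrollMinorsVanish (fun j => φ (L j)) c := by
    intro i j hij hjc
    have hminor : L i * L (j + 1) - L (i + 1) * L j ∈ M :=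
      hM ▸ Ideal.subset_span ⟨i, j, hij, hjc, rfl⟩
    simpa [sub_eq_zero] using hφΔ (hMΔ hminor)
  have hφL (j) (hj : j ≤ c + 1) := hφ (L j) (hhom j hj)
  by_cases h0 : φ (L 0) = 0
  · exact .inl (.inl fun j hj => (hφL j (by omega)).2.1 (hl.eq_zero_of_head_eq_zero h0 j hj))
  by_cases hlast : φ (L (c + 1)) = 0
  · exact .inl (.inr fun j h1 h2 => (hφL j h2).2.1 (hl.eq_zero_of_last_eq_zero hlast j h1 h2))
  have hφL0 := (hφL 0 (by omega)).1
  obtain ⟨α, hα⟩ : ∃ α : K, φ (L 1) = α • φ (L 0) := by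
    have hdvd : φ (L 0) ∣ φ (L 1) ^ 2 := ⟨φ (L 2), by rw [sq, ← hl 0 1 one_pos hc]⟩
    exact hφL0.exists_eq_smul_of_dvd (hφL 1 (by omega)).1 h0
      ((prime_of_isHomogeneous_one hφL0 h0).dvd_of_dvd_pow hdvd)
  have hpow := hl.eq_pow_smul h0 hα
  refine .inr ⟨L 0, hhom 0 (by omega), fun h => h0 ((hφL 0 (by omega)).2.2 h), α, ?_, ?_⟩
  · rintro rfl
    exact hlast (by simpa using hpow (c + 1) le_rfl)
  · intro j hj
    have hlin : L j - α ^ j • L 0 ∈ homogeneousSubmodule (Fin n) K 1 :=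
      sub_mem (hhom j hj) (Submodule.smul_mem _ _ (hhom 0 (by omega)))
    exact (hφ _ hlin).2.1 (by simp [hpow j hj])

/-- **Lemma 2.2.** If the ideal of `2×2` minors of a non-generic scroll block with rows
`(L_0,…,L_c)` and `(L_1,…,L_{c+1})` (linearly independent linear forms) is contained in the
ideal generated by a subspace `Δ` of linear forms, then either a whole row of the block lies
in `Δ`, or there are a linear form `H ∉ Δ` and `α ≠ 0` with `L_j - α^j H ∈ Δ` for all `j`. -/
theorem scroll_block_in_linear_ideal (K : Type) [Field K] (n c : ℕ) (hc : 1 ≤ c)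
    (L : ℕ → MvPolynomial (Fin n) K)
    (hhom : ∀ j ≤ c + 1, (L j).IsHomogeneous 1)
    (hli : LinearIndependent K (fun j : Fin (c + 2) => L j))
    (M : Ideal (MvPolynomial (Fin n) K))
    (hM : M = Ideal.span {f | ∃ i j : ℕ, i < j ∧ j ≤ c ∧
        f = L i * L (j + 1) - L (i + 1) * L j})
    (Δ : Submodule K (MvPolynomial (Fin n) K))
    (hΔ : ∀ f ∈ Δ, f.IsHomogeneous 1)
    (hMΔ : M ≤ Ideal.span (Δ : Set (MvPolynomial (Fin n) K))) :
    ((∀ j ≤ c, L j ∈ Δ) ∨ (∀ j, 1 ≤ j → j ≤ c + 1 → L j ∈ Δ)) ∨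
    (∃ H : MvPolynomial (Fin n) K, H.IsHomogeneous 1 ∧ H ∉ Δ ∧
      ∃ α : K, α ≠ 0 ∧ ∀ j ≤ c + 1, L j - α ^ j • H ∈ Δ) :=
  scroll_block_in_linear_ideal_general K n c hc L hhom M hM Δ hΔ hMΔ
end

section
/- Let K be a field, r ≥ 2, and let L_{i,0}, L_{i,1} (i = 1,…,r) be 2r linearly independent linear forms in a polynomial ring S = K[x_1,…,x_n]. Let M be the ideal generated by the 2×2 minors L_{i,0} L_{j,1} − L_{i,1} L_{j,0} (1 ≤ i < j ≤ r) of the generic 2×r matrix with rows (L_{1,0},…,L_{r,0}) and (L_{1,1},…,L_{r,1}). Let Δ be a K-subspace of the space of linear forms, and suppose M ⊆ (Δ). Then at least one of the following holds: (1) L_{i,0} ∈ Δ for all i = 1,…,r, or L_{i,1} ∈ Δ for all i = 1,…,r (all entries of one row lie in Δ); (2) there exists an index i with both L_{i,0} ∈ Δ and L_{i,1} ∈ Δ (a whole column lies in Δ); (3) there exist a nonzero constant α ∈ K and, for each i = 1,…,r, a linear form H_i ∉ Δ such that L_{i,0} − H_i ∈ Δ and L_{i,1} − α H_i ∈ Δ;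 (4) there exist linear forms H_1, H_2 ∉ Δ and, for each i = 1,…,r, a nonzero constant α_i ∈ K such that L_{i,0} − α_i H_1 ∈ Δ and L_{i,1} − α_i H_2 ∈ Δ. -/
/-!
Choose an idempotent endomorphism `π` of the coefficient space `σ →₀ K` whose kernel consists of
the `v` with `∑ vᵢ Xᵢ ∈ Δ`, and let `φ` be the substitution `Xᵢ ↦ ∑ π(eᵢ)ⱼ Xⱼ`. Then `φ` is
idempotent, `ker φ = (Δ)` and `L - φ L ∈ Δ` for every linear form `L`, so `φ` realises `S/(Δ)`
as a polynomial subring of `S`. The images `aᵢ = φ L_{i,0}`, `bᵢ = φ L_{i,1}` are linear forms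
with vanishing `2 × 2` minors. Unless a row or a column vanishes, all of them are nonzero; fixing
a column `z`, the linear form `a_z` is prime and divides `aᵢ b_z`, so either `a_z ∣ b_z`, and the
second row is a constant multiple of the first, or `a_z ∣ aᵢ` for all `i`, and every column is a
constant multiple of column `z`.
-/

theorem Submodule.exists_isIdempotentElem_ker_eq {K V : Type*} [DivisionRing K] [AddCommGroup V]
    [Module K V] (D : Submodule K V) :
    ∃ π : Module.End K V, IsIdempotentElem π ∧ LinearMap.ker π = D := by
  obtain ⟨W, hW⟩ := D.exists_isCompl
  exact ⟨W.projection D hW.symm, isIdempotentElem_projection _, ker_projection _⟩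

theorem mul_eq_mul_of_lt {ι R : Type*} [LinearOrder ι] [CommMonoid R] {a b : ι → R}
    (h : ∀ i j, i < j → a i * b j = a j * b i) (i j : ι) :
    a i * b j = a j * b i := by
  rcases lt_trichotomy i j with hij | rfl | hij
  · exact h i j hij
  · rfl
  · exact (h j i hij).symm

section Minors

variable {ι R : Type*} [CommRing R] [IsDomain R] {a b : ι → R}
variable (hab : ∀ i j, a i * b j = a j * b i)
include hab

theorem ne_zero_and_ne_zero_of_minors {i j k : ι} (ha : a i ≠ 0) (hb : b j ≠ 0)
    (hk : a k = 0 → b k ≠ 0) : a k ≠ 0 ∧ b k ≠ 0 := by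
  refine ⟨fun hak => ?_, fun hbk => ?_⟩
  · have : a i * b k = 0 := by rw [hab, hak, zero_mul]
    exact (mul_ne_zero ha (hk hak)) this
  · have : a k * b j = 0 := by rw [hab, hbk, mul_zero]
    exact mul_ne_zero (fun hak => hk hak hbk) hb this

theorem row_eq_mul_of_minors {z : ι} {c : R} (hz : a z ≠ 0) (h : b z = c * a z) (i : ι) :
    b i = c * a i :=
  mul_left_cancel₀ hz <| by rw [hab, h]; ring

theorem column_eq_mul_of_minors {z i : ι} {c : R} (hz : a z ≠ 0) (h : a i = c * a z) :
    b i = c * b z :=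
  mul_left_cancel₀ hz <| by rw [← hab, h]; ring

end Minors

namespace MvPolynomial

variable {σ K : Type*} [Field K]

theorem IsHomogeneous.prime_of_degree_one {L : MvPolynomial σ K} (hL : L.IsHomogeneous 1)
    (h0 : L ≠ 0) : Prime L := by
  refine (irreducible_of_totalDegree_eq_one (hL.totalDegree h0) fun x hx => ?_).prime
  obtain ⟨d, hd⟩ := ne_zero_iff.mp h0
  exact Ne.isUnit fun hx0 => hd (zero_dvd_iff.mp (hx0 ▸ hx d))

theorem IsHomogeneous.exists_eq_smul_of_dvd_s3 {L Q : MvPolynomial σ K} (hL : L.IsHomogeneous 1)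
    (hQ : Q.IsHomogeneous 1) (h : L ∣ Q) : ∃ c : K, Q = c • L := by
  obtain ⟨f, rfl⟩ := h
  rcases eq_or_ne (L * f) 0 with hQ0 | hQ0
  · exact ⟨0, by rw [hQ0, zero_smul]⟩
  obtain ⟨hL0, hf0⟩ := mul_ne_zero_iff.mp hQ0
  have hf : f.totalDegree = 0 := by
    have := hQ.totalDegree hQ0
    rw [totalDegree_mul_of_isDomain hL0 hf0, hL.totalDegree hL0] at this
    omega
  exact ⟨f.coeff 0, by rw [smul_eq_C_mul, mul_comm, ← totalDegree_eq_zero_iff_eq_C.mp hf]⟩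

theorem linearForms_minors_cases {ι : Type*} {a b : ι → MvPolynomial σ K}
    (ha : ∀ i, (a i).IsHomogeneous 1) (hb : ∀ i, (b i).IsHomogeneous 1)
    (hab : ∀ i j, a i * b j = a j * b i) :
    ((∀ i, a i = 0) ∨ (∀ i, b i = 0)) ∨ (∃ i, a i = 0 ∧ b i = 0) ∨
    (∃ α : K, α ≠ 0 ∧ ∀ i, a i ≠ 0 ∧ b i = α • a i) ∨
    (∃ z, a z ≠ 0 ∧ b z ≠ 0 ∧ ∀ i, ∃ α : K, α ≠ 0 ∧ a i = α • a z ∧ b i = α • b z) := by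
  by_cases hA : ∀ i, a i = 0
  · exact .inl (.inl hA)
  by_cases hB : ∀ i, b i = 0
  · exact .inl (.inr hB)
  by_cases hcol : ∃ i, a i = 0 ∧ b i = 0
  · exact .inr (.inl hcol)
  push Not at hA hB hcol
  obtain ⟨z, hz⟩ := hA
  obtain ⟨j, hj⟩ := hB
  have hne : ∀ k, a k ≠ 0 ∧ b k ≠ 0 := fun k => ne_zero_and_ne_zero_of_minors hab hz hj (hcol k)
  right; right
  by_cases hdvd : a z ∣ b z
  · obtain ⟨α, hα⟩ := (ha z).exists_eq_smul_of_dvd_s3 (hb z) hdvd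
    refine .inl ⟨α, fun h => (hne z).2 (by rw [hα, h, zero_smul]), fun i => ⟨(hne i).1, ?_⟩⟩
    rw [smul_eq_C_mul] at hα ⊢
    exact row_eq_mul_of_minors hab hz hα i
  · refine .inr ⟨z, (hne z).1, (hne z).2, fun i => ?_⟩
    have hzi : a z ∣ a i * b z := ⟨b i, hab i z⟩
    obtain ⟨α, hα⟩ := (ha z).exists_eq_smul_of_dvd_s3 (ha i)
      ((((ha z).prime_of_degree_one hz).dvd_or_dvd hzi).resolve_right hdvd)
    refine ⟨α, fun h => (hne i).1 (by rw [hα, h, zero_smul]), hα, ?_⟩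
    rw [smul_eq_C_mul] at hα ⊢
    exact column_eq_mul_of_minors hab hz hα

theorem range_sumSMulX : LinearMap.range (sumSMulX : (σ →₀ K) →ₗ[K] MvPolynomial σ K) =
    homogeneousSubmodule σ K 1 := by
  rw [homogeneousSubmodule_one_eq_span_X, sumSMulX, Finsupp.range_linearCombination]

theorem isHomogeneous_sumSMulX (v : σ →₀ K) : (sumSMulX v).IsHomogeneous 1 := by
  rw [← mem_homogeneousSubmodule, ← range_sumSMulX]
  exact LinearMap.mem_range_self _ v

theorem IsHomogeneous.exists_sumSMulX_eq {L : MvPolynomial σ K} (hL : L.IsHomogeneous 1) :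
    ∃ v, sumSMulX v = L := by
  rwa [← LinearMap.mem_range, range_sumSMulX]

noncomputable def linearSubst (π : Module.End K (σ →₀ K)) :
    MvPolynomial σ K →ₐ[K] MvPolynomial σ K :=
  aeval fun i => sumSMulX (π (Finsupp.single i 1))

variable {π : Module.End K (σ →₀ K)}

theorem linearSubst_X (i : σ) : linearSubst π (X i) = sumSMulX (π (Finsupp.single i 1)) :=
  aeval_X _ i

theorem linearSubst_sumSMulX (v : σ →₀ K) : linearSubst π (sumSMulX v) = sumSMulX (π v) := by
  suffices (linearSubst π).toLinearMap ∘ₗ sumSMulX = sumSMulX ∘ₗ π from LinearMap.congr_fun this v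
  refine Finsupp.lhom_ext fun i c => ?_
  rw [← Finsupp.smul_single_one]
  simp only [LinearMap.comp_apply, AlgHom.toLinearMap_apply, map_smul, sumSMulX,
    Finsupp.linearCombination_single, one_smul, linearSubst_X]

theorem IsHomogeneous.linearSubst {L : MvPolynomial σ K} (hL : L.IsHomogeneous 1)
    (π : Module.End K (σ →₀ K)) : (linearSubst π L).IsHomogeneous 1 :=
  hL.aeval _ fun _ => isHomogeneous_sumSMulX _

theorem linearSubst_linearSubst (hπ : IsIdempotentElem π) (f : MvPolynomial σ K) :
    linearSubst π (linearSubst π f) = linearSubst π f := by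
  suffices (linearSubst π).comp (linearSubst π) = linearSubst π from AlgHom.congr_fun this f
  refine algHom_ext fun i => ?_
  rw [AlgHom.comp_apply, linearSubst_X, linearSubst_sumSMulX, ← Module.End.mul_apply, hπ.eq]

variable {Δ : Submodule K (MvPolynomial σ K)}
  (hπ : IsIdempotentElem π) (hker : LinearMap.ker π = Δ.comap sumSMulX)
include hπ hker

theorem sub_linearSubst_mem {L : MvPolynomial σ K} (hL : L.IsHomogeneous 1) :
    L - linearSubst π L ∈ Δ := by
  obtain ⟨v, rfl⟩ := hL.exists_sumSMulX_eq
  rw [linearSubst_sumSMulX, ← map_sub, ← Submodule.mem_comap, ← hker, LinearMap.mem_ker, map_sub,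
    ← Module.End.mul_apply, hπ.eq, sub_self]

theorem ker_linearSubst (hΔ : ∀ f ∈ Δ, f.IsHomogeneous 1) :
    RingHom.ker (linearSubst π) = Ideal.span Δ := by
  set I := Ideal.span (Δ : Set (MvPolynomial σ K))
  refine le_antisymm (fun f hf => ?_) (Ideal.span_le.mpr fun L hL => ?_)
  -- `linearSubst π` fixes every variable modulo `(Δ)`, hence every polynomial.
  · have hmk : (Ideal.Quotient.mkₐ K I).comp (linearSubst π) = Ideal.Quotient.mkₐ K I := by
      refine algHom_ext fun i => ?_
      rw [AlgHom.comp_apply, Ideal.Quotient.mkₐ_eq_mk]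
      refine (Ideal.Quotient.eq.mpr ?_).symm
      exact Ideal.subset_span (sub_linearSubst_mem hπ hker (isHomogeneous_X K i))
    rw [← Ideal.Quotient.eq_zero_iff_mem, ← Ideal.Quotient.mkₐ_eq_mk K, ← hmk, AlgHom.comp_apply,
      RingHom.mem_ker.mp hf, map_zero]
  · obtain ⟨v, rfl⟩ := (hΔ L hL).exists_sumSMulX_eq
    rw [SetLike.mem_coe, RingHom.mem_ker, linearSubst_sumSMulX]
    rw [SetLike.mem_coe, ← Submodule.mem_comap, ← hker] at hL
    rw [hL, map_zero]

variable (hΔ : ∀ f ∈ Δ, f.IsHomogeneous 1)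
include hΔ

theorem mem_iff_linearSubst_eq_zero {L : MvPolynomial σ K} (hL : L.IsHomogeneous 1) :
    L ∈ Δ ↔ linearSubst π L = 0 := by
  refine ⟨fun h => ?_, fun h => ?_⟩
  · exact RingHom.mem_ker.mp (ker_linearSubst hπ hker hΔ ▸ Ideal.subset_span h)
  · simpa [h] using sub_linearSubst_mem hπ hker hL

theorem linearSubst_notMem {f : MvPolynomial σ K} (hf : linearSubst π f ≠ 0) :
    linearSubst π f ∉ Δ := fun h =>
  hf <| linearSubst_linearSubst hπ f ▸
    RingHom.mem_ker.mp (ker_linearSubst hπ hker hΔ ▸ Ideal.subset_span h)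

end MvPolynomial

open MvPolynomial

theorem generic_matrix_in_linear_ideal_general (K : Type) [Field K] (n r : ℕ)
    (A B : Fin r → MvPolynomial (Fin n) K)
    (hhom : ∀ i, (A i).IsHomogeneous 1 ∧ (B i).IsHomogeneous 1)
    (M : Ideal (MvPolynomial (Fin n) K))
    (hM : M = Ideal.span {f | ∃ i j : Fin r, i < j ∧ f = A i * B j - A j * B i})
    (Δ : Submodule K (MvPolynomial (Fin n) K))
    (hΔ : ∀ f ∈ Δ, f.IsHomogeneous 1)
    (hMΔ : M ≤ Ideal.span (Δ : Set (MvPolynomial (Fin n) K))) :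
    ((∀ i, A i ∈ Δ) ∨ (∀ i, B i ∈ Δ)) ∨
    (∃ i, A i ∈ Δ ∧ B i ∈ Δ) ∨
    (∃ α : K, α ≠ 0 ∧ ∀ i, ∃ H : MvPolynomial (Fin n) K, H.IsHomogeneous 1 ∧ H ∉ Δ ∧
      A i - H ∈ Δ ∧ B i - α • H ∈ Δ) ∨
    (∃ H₁ H₂ : MvPolynomial (Fin n) K, H₁.IsHomogeneous 1 ∧ H₂.IsHomogeneous 1 ∧
      H₁ ∉ Δ ∧ H₂ ∉ Δ ∧ ∀ i, ∃ α : K, α ≠ 0 ∧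
        A i - α • H₁ ∈ Δ ∧ B i - α • H₂ ∈ Δ) := by
  obtain ⟨π, hπ, hker⟩ := (Δ.comap sumSMulX).exists_isIdempotentElem_ker_eq
  have mem_iff {L : MvPolynomial (Fin n) K} (hL : L.IsHomogeneous 1) :=
    mem_iff_linearSubst_eq_zero hπ hker hΔ hL
  have notMem {f : MvPolynomial (Fin n) K} (hf : linearSubst π f ≠ 0) :=
    linearSubst_notMem hπ hker hΔ hf
  have subA i : A i - linearSubst π (A i) ∈ Δ := sub_linearSubst_mem hπ hker (hhom i).1
  have subB i : B i - linearSubst π (B i) ∈ Δ := sub_linearSubst_mem hπ hker (hhom i).2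
  have minors := mul_eq_mul_of_lt (a := fun i => linearSubst π (A i))
    (b := fun i => linearSubst π (B i)) fun i j hij => by
      have hmem : A i * B j - A j * B i ∈ RingHom.ker (linearSubst π) := by
        rw [ker_linearSubst hπ hker hΔ]
        exact hMΔ (hM ▸ Ideal.subset_span ⟨i, j, hij, rfl⟩)
      simpa [sub_eq_zero] using hmem
  rcases linearForms_minors_cases (fun i => (hhom i).1.linearSubst π)
      (fun i => (hhom i).2.linearSubst π) minors with
    (hA | hB) | ⟨i, hAi, hBi⟩ | ⟨α, hα, h⟩ | ⟨z, hAz, hBz, h⟩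
  · exact .inl (.inl fun i => (mem_iff (hhom i).1).mpr (hA i))
  · exact .inl (.inr fun i => (mem_iff (hhom i).2).mpr (hB i))
  · exact .inr (.inl ⟨i, (mem_iff (hhom i).1).mpr hAi, (mem_iff (hhom i).2).mpr hBi⟩)
  · refine .inr (.inr (.inl ⟨α, hα, fun i => ⟨_, (hhom i).1.linearSubst π, notMem (h i).1,
      subA i, ?_⟩⟩))
    simpa only [← (h i).2] using subB i
  · refine .inr (.inr (.inr ⟨_, _, (hhom z).1.linearSubst π, (hhom z).2.linearSubst π,
      notMem hAz, notMem hBz, fun i => ?_⟩))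
    obtain ⟨α, hα, hAi, hBi⟩ := h i
    exact ⟨α, hα, hAi ▸ subA i, hBi ▸ subB i⟩

/-- **Lemma 2.3.** If the ideal of `2×2` minors of a generic `2×r` matrix of linearly
independent linear forms (rows `(L_{1,0},…,L_{r,0})` and `(L_{1,1},…,L_{r,1})`) is
contained in the ideal generated by a subspace `Δ` of linear forms, then a whole row lies
in `Δ`, or a whole column lies in `Δ`, or one of two rank-one deformation cases holds. -/
theorem generic_matrix_in_linear_ideal (K : Type) [Field K] (n r : ℕ) (hr : 2 ≤ r)
    (A B : Fin r → MvPolynomial (Fin n) K)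
    (hhom : ∀ i, (A i).IsHomogeneous 1 ∧ (B i).IsHomogeneous 1)
    (hli : LinearIndependent K (Sum.elim A B : Fin r ⊕ Fin r → MvPolynomial (Fin n) K))
    (M : Ideal (MvPolynomial (Fin n) K))
    (hM : M = Ideal.span {f | ∃ i j : Fin r, i < j ∧ f = A i * B j - A j * B i})
    (Δ : Submodule K (MvPolynomial (Fin n) K))
    (hΔ : ∀ f ∈ Δ, f.IsHomogeneous 1)
    (hMΔ : M ≤ Ideal.span (Δ : Set (MvPolynomial (Fin n) K))) :
    ((∀ i, A i ∈ Δ) ∨ (∀ i, B i ∈ Δ)) ∨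
    (∃ i, A i ∈ Δ ∧ B i ∈ Δ) ∨
    (∃ α : K, α ≠ 0 ∧ ∀ i, ∃ H : MvPolynomial (Fin n) K, H.IsHomogeneous 1 ∧ H ∉ Δ ∧
      A i - H ∈ Δ ∧ B i - α • H ∈ Δ) ∨
    (∃ H₁ H₂ : MvPolynomial (Fin n) K, H₁.IsHomogeneous 1 ∧ H₂.IsHomogeneous 1 ∧
      H₁ ∉ Δ ∧ H₂ ∉ Δ ∧ ∀ i, ∃ α : K, α ≠ 0 ∧
        A i - α • H₁ ∈ Δ ∧ B i - α • H₂ ∈ Δ) :=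
  generic_matrix_in_linear_ideal_general K n r A B hhom M hM Δ hΔ hMΔ
end
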